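/- Let u₁, u₂, u₃ be the roots of λ³ - λ² - t = 0 for real t ≠ 0 near 0, with u₁, u₂ → 0 and u₃ → 1 as t → 0. Then Σ_{j=1,2} c1(B(u_j))·c2(B(u_j)) / det B(u_j) converges to 15 as t → 0, where B(u) is the matrix with rows (1-u, -u², 0), (1, -2u, 0), (0, 0, -u), c1 is the trace, and c2 is the sum of the principal 2×2 minors. -/

import Mathlib

open Matrix Filter Topology

/-- Second elementary symmetric function of the eigenvalues of a 3×3 matrix:
the sum of the principal 2×2 minors. -/
def c2 (A : Matrix (Fin 3) (Fin 3) ℂ) : ℂ :=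
  (A 0 0 * A 1 1 - A 0 1 * A 1 0) + (A 0 0 * A 2 2 - A 0 2 * A 2 0) +
    (A 1 1 * A 2 2 - A 1 2 * A 2 1)

/-- The linear part of the vector field at the singular point `(u², u, 0)`. -/
def B (u : ℂ) : Matrix (Fin 3) (Fin 3) ℂ := !![1 - u, -u ^ 2, 0; 1, -2 * u, 0; 0, 0, -u]

/-!
The residue `f(u) = c₁c₂/det (B u)` has the partial fraction expansion
`f(u) = 8 - 3/(2u) - 5/(2(2 - 3u))`. Over the three roots of `p(z) = z³ - z² - t`,
`∑ 1/u_j = e₂/e₃ = 0` and `∑ 1/(2/3 - u_j) = p'(2/3)/p(2/3) = 0`, so the three residues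
add up to `24` for every small `t ≠ 0`. Hence the two residues at the roots near `0`
equal `24 - f(u₃) → 24 - f(1) = 24 - 9 = 15`.
-/

noncomputable def bbResidue (u : ℂ) : ℂ := (B u).trace * c2 (B u) / (B u).det

lemma trace_B (u : ℂ) : (B u).trace = 1 - 4 * u := by
  simp only [B, trace_fin_three, of_apply, cons_val', cons_val_zero, cons_val_one, cons_val,
    cons_val_fin_one]
  ring

lemma c2_B (u : ℂ) : c2 (B u) = 6 * u ^ 2 - 3 * u := by
  simp only [c2, B, of_apply, cons_val', cons_val_zero, cons_val_one, cons_val, cons_val_fin_one]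
  ring

lemma det_B (u : ℂ) : (B u).det = u ^ 2 * (2 - 3 * u) := by
  simp only [B, det_fin_three, of_apply, cons_val', cons_val_zero, cons_val_one, cons_val,
    cons_val_fin_one]
  ring

lemma bbResidue_eq (u : ℂ) :
    bbResidue u = (1 - 4 * u) * (6 * u ^ 2 - 3 * u) / (u ^ 2 * (2 - 3 * u)) := by
  rw [bbResidue, trace_B, c2_B, det_B]

lemma bbResidue_eq_partial_fractions {u : ℂ} (hu : u ≠ 0) (hu' : 2 - 3 * u ≠ 0) :
    bbResidue u = 8 - 3 / 2 / u - 5 / 2 / (2 - 3 * u) := by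
  have hu'' : 2 - u * 3 ≠ 0 := by rwa [mul_comm] at hu'
  rw [bbResidue_eq]
  field_simp
  ring

lemma bbResidue_one : bbResidue 1 = 9 := by
  rw [bbResidue_eq]; norm_num

lemma continuousAt_bbResidue_one : ContinuousAt bbResidue 1 := by
  have hden : (1 : ℂ) ^ 2 * (2 - 3 * 1) ≠ 0 := by norm_num
  simp only [funext bbResidue_eq]
  exact ContinuousAt.div (by fun_prop) (by fun_prop) hden

lemma bbResidue_add_add_of_roots {t a b c : ℂ} (ht : t ≠ 0) (ht' : t ≠ -4 / 27)
    (hroots : ∀ z : ℂ, z ^ 3 - z ^ 2 - t = (z - a) * (z - b) * (z - c)) :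
    bbResidue a + bbResidue b + bbResidue c = 24 := by
  have hp₀ := hroots 0
  have hp₁ := hroots 1
  have hpm := hroots (-1)
  have hp := hroots (2 / 3)
  have he₁ : a + b + c = 1 := by linear_combination hp₁ / 2 + hpm / 2 - hp₀
  have he₂ : a * b + a * c + b * c = 0 := by linear_combination hpm / 2 - hp₁ / 2
  have he₃ : a * b * c = t := by linear_combination hp₀
  obtain ⟨hab, hc⟩ := mul_ne_zero_iff.mp (he₃ ▸ ht : a * b * c ≠ 0)
  obtain ⟨ha, hb⟩ := mul_ne_zero_iff.mp hab
  -- `p(2/3) = -4/27 - t`, so no root equals `2/3`.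
  have hprod : (2 - 3 * a) * (2 - 3 * b) * (2 - 3 * c) ≠ 0 := by
    intro h
    exact ht' (by linear_combination -hp - h / 27)
  obtain ⟨hab', hc'⟩ := mul_ne_zero_iff.mp hprod
  obtain ⟨ha', hb'⟩ := mul_ne_zero_iff.mp hab'
  have hsum₁ : 1 / a + 1 / b + 1 / c = 0 := by
    field_simp
    linear_combination he₂
  have hsum₂ : 1 / (2 - 3 * a) + 1 / (2 - 3 * b) + 1 / (2 - 3 * c) = 0 := by
    field_simp
    linear_combination -12 * he₁ + 9 * he₂
  rw [bbResidue_eq_partial_fractions ha ha', bbResidue_eq_partial_fractions hb hb',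
    bbResidue_eq_partial_fractions hc hc']
  linear_combination -3 / 2 * hsum₁ - 5 / 2 * hsum₂

theorem stmt_6_general (u₁ u₂ u₃ : ℝ → ℂ)
    (hroots : ∀ t : ℝ, t ≠ 0 → ∀ z : ℂ,
      z ^ 3 - z ^ 2 - (t : ℂ) = (z - u₁ t) * (z - u₂ t) * (z - u₃ t))
    (hlim₃ : Tendsto u₃ (𝓝[≠] (0 : ℝ)) (𝓝 1)) :
    Tendsto (fun t : ℝ =>
        (B (u₁ t)).trace * c2 (B (u₁ t)) / (B (u₁ t)).det
          + (B (u₂ t)).trace * c2 (B (u₂ t)) / (B (u₂ t)).det)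
      (𝓝[≠] (0 : ℝ)) (𝓝 15) := by
  have hsmall : ∀ᶠ t in 𝓝[≠] (0 : ℝ), t ≠ 0 ∧ t ≠ -4 / 27 :=
    (eventually_mem_nhdsWithin.and
      (eventually_nhdsWithin_of_eventually_nhds (eventually_ne_nhds (by norm_num))))
  have hsum : ∀ᶠ t in 𝓝[≠] (0 : ℝ),
      24 - bbResidue (u₃ t) = bbResidue (u₁ t) + bbResidue (u₂ t) := by
    filter_upwards [hsmall] with t ⟨ht, ht'⟩
    have := bbResidue_add_add_of_roots (by exact_mod_cast ht) (by exact_mod_cast ht')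
      (hroots t ht)
    linear_combination -this
  have hlim : Tendsto (fun t => 24 - bbResidue (u₃ t)) (𝓝[≠] (0 : ℝ)) (𝓝 15) := by
    have := (continuousAt_bbResidue_one.tendsto.comp hlim₃).const_sub 24
    rwa [bbResidue_one, show (24 : ℂ) - 9 = 15 by norm_num] at this
  exact hlim.congr' hsum

theorem stmt_6 (u₁ u₂ u₃ : ℝ → ℂ)
    (hroots : ∀ t : ℝ, t ≠ 0 → ∀ z : ℂ,
      z ^ 3 - z ^ 2 - (t : ℂ) = (z - u₁ t) * (z - u₂ t) * (z - u₃ t))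
    (hlim₁ : Tendsto u₁ (𝓝[≠] (0 : ℝ)) (𝓝 0))
    (hlim₂ : Tendsto u₂ (𝓝[≠] (0 : ℝ)) (𝓝 0))
    (hlim₃ : Tendsto u₃ (𝓝[≠] (0 : ℝ)) (𝓝 1)) :
    Tendsto (fun t : ℝ =>
        (B (u₁ t)).trace * c2 (B (u₁ t)) / (B (u₁ t)).det
          + (B (u₂ t)).trace * c2 (B (u₂ t)) / (B (u₂ t)).det)
      (𝓝[≠] (0 : ℝ)) (𝓝 15) :=
  stmt_6_general u₁ u₂ u₃ hroots hlim₃
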